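/- Let ψ ∈ C²([0,∞);[0,∞)) and set Φ(v) := ψ(|v|²) for v ∈ ℝ^d. Assume C_Φ := ∫_{ℝ^d} e^{-Φ(v)} dv < ∞, ∫_{ℝ^d} (|∇Φ(v)|² + ‖∇²Φ(v)‖) μ₂(dv) < ∞, and lim_{|v|→∞} |∇(e^{-Φ})(v)| = 0. Then 2 ∫_{ℝ^d} ( (2/d) ψ''(|v|²)|v|² + ψ'(|v|²) ) μ₂(dv) = (4/d) ∫_{ℝ^d} ψ'(|v|²)² |v|² μ₂(dv) = (2 ω_d / C_Φ) ∫_0^∞ u^{d/2} ψ'(u)² e^{-ψ(u)} du, and this common value is finite, where ω_d is the volume of the unit ball in ℝ^d. -/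

import Mathlib

open MeasureTheory Real Filter Topology Set
open scoped RealInnerProductSpace

noncomputable section

/-- `d`-dimensional Euclidean space. -/
abbrev E (d : ℕ) : Type := EuclideanSpace ℝ (Fin d)

/-- The probability measure `μ₂` with density proportional to `e^{-Φ}`. -/
def mu2 (d : ℕ) (Φ : E d → ℝ) : Measure (E d) :=
  volume.withDensity fun v =>
    ENNReal.ofReal (Real.exp (-(Φ v)) / ∫ w : E d, Real.exp (-(Φ w)))

/-!
For `v ≠ 0` the gradient of `Φ = ψ(|v|²)` is `2ψ'(|v|²) v` and its Hessian is
`4ψ''(|v|²) v ⊗ v + 2ψ'(|v|²) I`, with eigenvalues `4ψ''|v|² + 2ψ'` (along `v`) and `2ψ'`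
(on `v⊥`). Hence both integrands are dominated by the moment hypothesis. In polar coordinates
both `μ₂`-integrals become one-dimensional integrals against `r^{d-1} e^{-ψ(r²)} dr`, and the
first identity is `∫₀^∞ F' = 0` for the flux `F(r) = r^d ψ'(r²) e^{-ψ(r²)}`: `F(0) = 0`, and
`F → 0` at infinity because both `F` and `F'` are integrable. The second identity is the
substitution `u = r²`.
-/

lemma DifferentiableOn.hasDerivAt_derivWithin_Ici {f : ℝ → ℝ} {a u : ℝ}
    (hf : DifferentiableOn ℝ f (Ici a)) (hu : a < u) : HasDerivAt f (derivWithin f (Ici a) u) u :=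
  (hf u hu.le).hasDerivWithinAt.hasDerivAt (Ici_mem_nhds hu)

lemma ContDiffOn.differentiableOn_derivWithin_Ici {f : ℝ → ℝ} {a : ℝ}
    (hf : ContDiffOn ℝ 2 f (Ici a)) : DifferentiableOn ℝ (derivWithin f (Ici a)) (Ici a) :=
  (hf.derivWithin (m := 1) (uniqueDiffOn_Ici a) (by norm_num)).differentiableOn one_ne_zero

section RadialCalculus

variable {F : Type*} [NormedAddCommGroup F] [InnerProductSpace ℝ F] {ψ : ℝ → ℝ}

lemma hasGradientAt_comp_norm_sq [CompleteSpace F] (hψ : DifferentiableOn ℝ ψ (Ici 0))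
    {v : F} (hv : v ≠ 0) :
    HasGradientAt (fun w : F => ψ (‖w‖ ^ 2)) ((2 * derivWithin ψ (Ici 0) (‖v‖ ^ 2)) • v) v := by
  have hψ' := hψ.hasDerivAt_derivWithin_Ici (u := ‖v‖ ^ 2) (by positivity)
  rw [hasGradientAt_iff_hasFDerivAt]
  refine (hψ'.comp_hasFDerivAt v (hasStrictFDerivAt_norm_sq v).hasFDerivAt).congr_fderiv ?_
  ext w
  simp only [smul_apply, coe_innerSL_apply, nsmul_eq_mul, Nat.cast_ofNat, smul_eq_mul, map_smul,
    InnerProductSpace.toDual_apply_apply]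
  ring

lemma hasFDerivAt_gradient_comp_norm_sq [CompleteSpace F] (hψ : ContDiffOn ℝ 2 ψ (Ici 0))
    {v : F} (hv : v ≠ 0) :
    HasFDerivAt (gradient fun w : F => ψ (‖w‖ ^ 2))
      (((4 * derivWithin (derivWithin ψ (Ici 0)) (Ici 0) (‖v‖ ^ 2)) • innerSL ℝ v).smulRight v
        + (2 * derivWithin ψ (Ici 0) (‖v‖ ^ 2)) • ContinuousLinearMap.id ℝ F) v := by
  have hψ₂ := hψ.differentiableOn_derivWithin_Ici.hasDerivAt_derivWithin_Ici
    (u := ‖v‖ ^ 2) (by positivity)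
  have hcoeff : HasFDerivAt (fun w : F => 2 * derivWithin ψ (Ici 0) (‖w‖ ^ 2))
      ((4 * derivWithin (derivWithin ψ (Ici 0)) (Ici 0) (‖v‖ ^ 2)) • innerSL ℝ v) v := by
    refine ((hψ₂.comp_hasFDerivAt v (hasStrictFDerivAt_norm_sq v).hasFDerivAt).const_mul
      2).congr_fderiv ?_
    ext w
    simp only [smul_apply, coe_innerSL_apply, nsmul_eq_mul, Nat.cast_ofNat, smul_eq_mul]
    ring
  have hgrad : (fun w : F => (2 * derivWithin ψ (Ici 0) (‖w‖ ^ 2)) • w)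
      =ᶠ[𝓝 v] gradient fun w : F => ψ (‖w‖ ^ 2) := by
    filter_upwards [isOpen_ne.mem_nhds hv] with w hw
    exact ((hasGradientAt_comp_norm_sq (hψ.differentiableOn (by norm_num)) hw).gradient).symm
  rw [add_comm]
  exact (hcoeff.smul (hasFDerivAt_id v)).congr_of_eventuallyEq hgrad.symm

end RadialCalculus

section OpNorm

variable {F : Type*} [NormedAddCommGroup F] [InnerProductSpace ℝ F]

lemma abs_le_opNorm_of_apply_eq_smul {T : F →L[ℝ] F} {w : F} {c : ℝ} (hw : w ≠ 0)
    (h : T w = c • w) : |c| ≤ ‖T‖ := by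
  have := T.le_opNorm w
  rw [h, norm_smul, Real.norm_eq_abs] at this
  exact le_of_mul_le_mul_right this (norm_pos_iff.mpr hw)

lemma abs_add_finrank_mul_le_opNorm [FiniteDimensional ℝ F] {n : ℕ}
    (hn : Module.finrank ℝ F = n) {v : F} (hv : v ≠ 0) (a b : ℝ) :
    |a * ‖v‖ ^ 2 + n * b|
      ≤ n * ‖(a • innerSL ℝ v).smulRight v + b • ContinuousLinearMap.id ℝ F‖ := by
  set T := (a • innerSL ℝ v).smulRight v + b • ContinuousLinearMap.id ℝ F
  have hn1 : (1 : ℝ) ≤ n := by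
    rw [← hn]; exact_mod_cast Module.finrank_pos_iff_exists_ne_zero.mpr ⟨v, hv⟩
  have hTv : |a * ‖v‖ ^ 2 + b| ≤ ‖T‖ := abs_le_opNorm_of_apply_eq_smul hv <| by
    simp [T, add_smul]
  have hTorth : ((n : ℝ) - 1) * |b| ≤ ((n : ℝ) - 1) * ‖T‖ := by
    by_cases hspan : (ℝ ∙ v)ᗮ = ⊥
    · rw [Submodule.orthogonal_eq_bot_iff] at hspan
      have := finrank_span_singleton (K := ℝ) hv
      rw [hspan, finrank_top, hn] at this
      simp [this]
    · obtain ⟨w, hw, hw0⟩ := (Submodule.ne_bot_iff _).mp hspan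
      have hvw : ⟪v, w⟫ = 0 := Submodule.inner_right_of_mem_orthogonal
        (Submodule.mem_span_singleton_self v) hw
      refine mul_le_mul_of_nonneg_left (abs_le_opNorm_of_apply_eq_smul hw0 ?_) (by linarith)
      simp [T, hvw]
  calc |a * ‖v‖ ^ 2 + n * b| = |(a * ‖v‖ ^ 2 + b) + ((n : ℝ) - 1) * b| := by ring_nf
    _ ≤ |a * ‖v‖ ^ 2 + b| + |((n : ℝ) - 1) * b| := abs_add_le _ _
    _ = |a * ‖v‖ ^ 2 + b| + ((n : ℝ) - 1) * |b| := by
      rw [abs_mul, abs_of_nonneg (by linarith : (0 : ℝ) ≤ n - 1)]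
    _ ≤ n * ‖T‖ := by linarith

end OpNorm

lemma continuous_comp_norm_sq {F : Type*} [SeminormedAddCommGroup F] {h : ℝ → ℝ}
    (hh : ContinuousOn h (Ici 0)) : Continuous fun v : F => h (‖v‖ ^ 2) :=
  hh.comp_continuous (continuous_norm.pow 2) fun v => sq_nonneg ‖v‖

section RadialMoments

variable {F : Type*} [NormedAddCommGroup F] [InnerProductSpace ℝ F] [CompleteSpace F]
  {ψ : ℝ → ℝ}

lemma norm_gradient_comp_norm_sq_sq (hψ : DifferentiableOn ℝ ψ (Ici 0)) {v : F} (hv : v ≠ 0) :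
    ‖gradient (fun w : F => ψ (‖w‖ ^ 2)) v‖ ^ 2
      = 4 * derivWithin ψ (Ici 0) (‖v‖ ^ 2) ^ 2 * ‖v‖ ^ 2 := by
  rw [(hasGradientAt_comp_norm_sq hψ hv).gradient, norm_smul, mul_pow, Real.norm_eq_abs, sq_abs]
  ring

lemma two_mul_abs_radial_laplacian_le [FiniteDimensional ℝ F] {n : ℕ}
    (hn : Module.finrank ℝ F = n) (hψ : ContDiffOn ℝ 2 ψ (Ici 0)) {v : F} (hv : v ≠ 0) :
    2 * |2 / n * derivWithin (derivWithin ψ (Ici 0)) (Ici 0) (‖v‖ ^ 2) * ‖v‖ ^ 2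
        + derivWithin ψ (Ici 0) (‖v‖ ^ 2)|
      ≤ ‖fderiv ℝ (gradient fun w : F => ψ (‖w‖ ^ 2)) v‖ := by
  have hn0 : (0 : ℝ) < n := by
    rw [← hn]; exact_mod_cast Module.finrank_pos_iff_exists_ne_zero.mpr ⟨v, hv⟩
  rw [(hasFDerivAt_gradient_comp_norm_sq hψ hv).fderiv]
  set a := derivWithin (derivWithin ψ (Ici 0)) (Ici 0) (‖v‖ ^ 2)
  set b := derivWithin ψ (Ici 0) (‖v‖ ^ 2)
  have htrace : (n : ℝ) * (2 * (2 / n * a * ‖v‖ ^ 2 + b)) = 4 * a * ‖v‖ ^ 2 + n * (2 * b) := by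
    field_simp
    ring
  refine le_of_mul_le_mul_left ?_ hn0
  calc (n : ℝ) * (2 * |2 / n * a * ‖v‖ ^ 2 + b|) = |4 * a * ‖v‖ ^ 2 + n * (2 * b)| := by
        rw [← htrace, abs_mul, abs_mul, abs_two, abs_of_pos hn0]
    _ ≤ _ := abs_add_finrank_mul_le_opNorm hn hv (4 * a) (2 * b)

variable [MeasurableSpace F] [BorelSpace F] {μ : Measure F}

lemma integrable_radial_laplacian [FiniteDimensional ℝ F] {n : ℕ} (hn : Module.finrank ℝ F = n)
    (hψ : ContDiffOn ℝ 2 ψ (Ici 0)) (h0 : ∀ᵐ v ∂μ, v ≠ 0)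
    (hmom : Integrable (fun v => ‖gradient (fun w : F => ψ (‖w‖ ^ 2)) v‖ ^ 2
      + ‖fderiv ℝ (gradient fun w : F => ψ (‖w‖ ^ 2)) v‖) μ) :
    Integrable (fun v : F => 2 / n * derivWithin (derivWithin ψ (Ici 0)) (Ici 0) (‖v‖ ^ 2)
      * ‖v‖ ^ 2 + derivWithin ψ (Ici 0) (‖v‖ ^ 2)) μ := by
  have hψ₁ := hψ.continuousOn_derivWithin (uniqueDiffOn_Ici 0) (by norm_num)
  have hψ₂ := (hψ.derivWithin (m := 1) (uniqueDiffOn_Ici 0) (by norm_num)).continuousOn_derivWithin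
    (uniqueDiffOn_Ici 0) le_rfl
  have hcont : Continuous fun v : F => 2 / n * derivWithin (derivWithin ψ (Ici 0)) (Ici 0)
      (‖v‖ ^ 2) * ‖v‖ ^ 2 + derivWithin ψ (Ici 0) (‖v‖ ^ 2) := by
    have := continuous_comp_norm_sq (F := F) hψ₁
    have := continuous_comp_norm_sq (F := F) hψ₂
    fun_prop
  refine hmom.mono' hcont.aestronglyMeasurable ?_
  filter_upwards [h0] with v hv
  have := two_mul_abs_radial_laplacian_le hn hψ hv
  rw [Real.norm_eq_abs]
  nlinarith [abs_nonneg (2 / n * derivWithin (derivWithin ψ (Ici 0)) (Ici 0) (‖v‖ ^ 2) * ‖v‖ ^ 2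
    + derivWithin ψ (Ici 0) (‖v‖ ^ 2)), sq_nonneg ‖gradient (fun w : F => ψ (‖w‖ ^ 2)) v‖]

lemma integrable_radial_gradient_sq (hψ : ContDiffOn ℝ 2 ψ (Ici 0)) (h0 : ∀ᵐ v ∂μ, v ≠ 0)
    (hmom : Integrable (fun v => ‖gradient (fun w : F => ψ (‖w‖ ^ 2)) v‖ ^ 2
      + ‖fderiv ℝ (gradient fun w : F => ψ (‖w‖ ^ 2)) v‖) μ) :
    Integrable (fun v : F => derivWithin ψ (Ici 0) (‖v‖ ^ 2) ^ 2 * ‖v‖ ^ 2) μ := by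
  have hψ₁ := hψ.continuousOn_derivWithin (uniqueDiffOn_Ici 0) (by norm_num)
  have hcont : Continuous fun v : F => derivWithin ψ (Ici 0) (‖v‖ ^ 2) ^ 2 * ‖v‖ ^ 2 := by
    have := continuous_comp_norm_sq (F := F) hψ₁
    fun_prop
  refine hmom.mono' hcont.aestronglyMeasurable ?_
  filter_upwards [h0] with v hv
  rw [Real.norm_eq_abs, abs_of_nonneg (by positivity)]
  have := norm_gradient_comp_norm_sq_sq (hψ.differentiableOn (by norm_num)) hv
  nlinarith [norm_nonneg (fderiv ℝ (gradient fun w : F => ψ (‖w‖ ^ 2)) v),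
    mul_nonneg (sq_nonneg (derivWithin ψ (Ici 0) (‖v‖ ^ 2))) (sq_nonneg ‖v‖)]

end RadialMoments

section RadialProfile

variable {ψ : ℝ → ℝ}

lemma hasDerivAt_radial_flux (hψ : ContDiffOn ℝ 2 ψ (Ici 0)) {n : ℕ} (hn : 0 < n) {r : ℝ}
    (hr : 0 < r) :
    HasDerivAt (fun r => r ^ n * derivWithin ψ (Ici 0) (r ^ 2) * exp (-ψ (r ^ 2)))
      (n * (r ^ (n - 1) * (exp (-ψ (r ^ 2)) * (2 / n * derivWithin (derivWithin ψ (Ici 0))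
          (Ici 0) (r ^ 2) * r ^ 2 + derivWithin ψ (Ici 0) (r ^ 2))))
        - 2 * (r ^ (n - 1) * (exp (-ψ (r ^ 2)) * (derivWithin ψ (Ici 0) (r ^ 2) ^ 2 * r ^ 2))))
      r := by
  have hu : 0 < r ^ 2 := by positivity
  have hψ₀ := (hψ.differentiableOn (by norm_num)).hasDerivAt_derivWithin_Ici hu
  have hψ₁ := hψ.differentiableOn_derivWithin_Ici.hasDerivAt_derivWithin_Ici hu
  have hsq : HasDerivAt (fun r : ℝ => r ^ 2) (2 * r) r := by simpa using hasDerivAt_pow 2 r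
  have hflux :
      HasDerivAt (fun r => r ^ n * derivWithin ψ (Ici 0) (r ^ 2) * exp (-ψ (r ^ 2))) _ r :=
    ((hasDerivAt_pow n r).mul (hψ₁.comp (h := fun r : ℝ => r ^ 2) r hsq)).mul
      (hψ₀.comp (h := fun r : ℝ => r ^ 2) r hsq).neg.exp
  refine hflux.congr_deriv ?_
  obtain ⟨m, rfl⟩ := Nat.exists_eq_add_of_lt hn
  simp only [zero_add, Nat.add_sub_cancel, Nat.cast_add, Nat.cast_one, pow_succ,
    Function.comp_apply, Pi.mul_apply, Pi.neg_apply]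
  field_simp
  ring

theorem integral_Ioi_laplacian_profile_eq (hψ : ContDiffOn ℝ 2 ψ (Ici 0)) {n : ℕ} (hn : 0 < n)
    (h₀ : IntegrableOn (fun r => r ^ (n - 1) * exp (-ψ (r ^ 2))) (Ioi 0))
    (h₁ : IntegrableOn (fun r => r ^ (n - 1) * (exp (-ψ (r ^ 2)) * (2 / n * derivWithin
      (derivWithin ψ (Ici 0)) (Ici 0) (r ^ 2) * r ^ 2 + derivWithin ψ (Ici 0) (r ^ 2)))) (Ioi 0))
    (h₂ : IntegrableOn (fun r => r ^ (n - 1) * (exp (-ψ (r ^ 2))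
      * (derivWithin ψ (Ici 0) (r ^ 2) ^ 2 * r ^ 2))) (Ioi 0)) :
    ∫ r in Ioi 0, r ^ (n - 1) * (exp (-ψ (r ^ 2)) * (2 / n * derivWithin
        (derivWithin ψ (Ici 0)) (Ici 0) (r ^ 2) * r ^ 2 + derivWithin ψ (Ici 0) (r ^ 2)))
      = 2 / n * ∫ r in Ioi 0, r ^ (n - 1) * (exp (-ψ (r ^ 2))
        * (derivWithin ψ (Ici 0) (r ^ 2) ^ 2 * r ^ 2)) := by
  set flux := fun r : ℝ => r ^ n * derivWithin ψ (Ici 0) (r ^ 2) * exp (-ψ (r ^ 2))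
  have hcont : Continuous flux := by
    have hψ₁ : Continuous fun r : ℝ => derivWithin ψ (Ici 0) (r ^ 2) :=
      (hψ.continuousOn_derivWithin (uniqueDiffOn_Ici 0) (by norm_num)).comp_continuous
        (continuous_pow 2) sq_nonneg
    have hψ₀ : Continuous fun r : ℝ => ψ (r ^ 2) :=
      hψ.continuousOn.comp_continuous (continuous_pow 2) sq_nonneg
    exact ((continuous_pow n).mul hψ₁).mul (continuous_exp.comp hψ₀.neg)
  -- `flux = w t` with `w = r^(n-1) e^{-ψ(r²)}` and `t = r ψ'(r²)`, and `2|t| ≤ 1 + t²`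
  have hbound : ∀ r ∈ Ioi (0 : ℝ), ‖flux r‖ ≤ (r ^ (n - 1) * exp (-ψ (r ^ 2))
      + r ^ (n - 1) * (exp (-ψ (r ^ 2)) * (derivWithin ψ (Ici 0) (r ^ 2) ^ 2 * r ^ 2))) / 2 := by
    intro r hr
    obtain ⟨m, rfl⟩ := Nat.exists_eq_add_of_lt hn
    set t := r * derivWithin ψ (Ici 0) (r ^ 2)
    have hw : 0 ≤ r ^ m * exp (-ψ (r ^ 2)) := by have : (0 : ℝ) < r := hr; positivity
    have hflux : flux r = r ^ m * exp (-ψ (r ^ 2)) * t := by simp only [flux, t]; ring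
    simp only [zero_add, Nat.add_sub_cancel, hflux, norm_mul, Real.norm_of_nonneg hw,
      Real.norm_eq_abs]
    nlinarith [mul_nonneg hw (sq_nonneg (|t| - 1)), sq_abs t]
  have hflux_int : IntegrableOn flux (Ioi 0) :=
    ((h₀.add h₂).div_const 2).mono' hcont.aestronglyMeasurable
      (ae_restrict_of_forall_mem measurableSet_Ioi hbound)
  have hderiv := fun r (hr : r ∈ Ioi (0 : ℝ)) => hasDerivAt_radial_flux hψ hn hr
  have hderiv_int := (h₁.const_mul (n : ℝ)).sub (h₂.const_mul 2)
  have hftc := integral_Ioi_of_hasDerivAt_of_tendsto hcont.continuousWithinAt hderiv hderiv_int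
    (tendsto_zero_of_hasDerivAt_of_integrableOn_Ioi hderiv hderiv_int hflux_int)
  have hflux0 : flux 0 = 0 := by simp [flux, hn.ne']
  rw [integral_sub (h₁.const_mul _) (h₂.const_mul _), integral_const_mul, integral_const_mul,
    hflux0, sub_zero] at hftc
  rw [div_mul_eq_mul_div, eq_div_iff (by positivity)]
  linarith

end RadialProfile

section ChangeOfVariables

variable {G : Type*} [NormedAddCommGroup G] [NormedSpace ℝ G]

lemma integral_Ioi_comp_sq (g : ℝ → G) : ∫ x in Ioi 0, (2 * x) • g (x ^ 2) = ∫ y in Ioi 0, g y := by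
  simpa [Real.rpow_two, show (2 : ℝ) - 1 = 1 by norm_num] using
    integral_comp_rpow_Ioi g (two_ne_zero : (2 : ℝ) ≠ 0)

lemma integrableOn_Ioi_comp_sq_iff (g : ℝ → G) :
    IntegrableOn (fun x => (2 * x) • g (x ^ 2)) (Ioi 0) ↔ IntegrableOn g (Ioi 0) := by
  simpa [Real.rpow_two, show (2 : ℝ) - 1 = 1 by norm_num] using
    integrableOn_Ioi_comp_rpow_iff g (two_ne_zero : (2 : ℝ) ≠ 0)

lemma sq_rpow_natCast_div_two {x : ℝ} (hx : 0 ≤ x) (d : ℕ) : (x ^ 2) ^ ((d : ℝ) / 2) = x ^ d := by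
  rw [← Real.rpow_natCast x 2, ← Real.rpow_mul hx, ← Real.rpow_natCast]
  congr 1
  push_cast
  ring

end ChangeOfVariables

section Mu2

variable {d : ℕ} {Φ : E d → ℝ}

lemma mu2_absolutelyContinuous : mu2 d Φ ≪ volume := withDensity_absolutelyContinuous _ _

lemma integral_mu2 (hΦ : Measurable Φ) (g : E d → ℝ) :
    ∫ v, g v ∂mu2 d Φ = (∫ v, exp (-Φ v) * g v) / ∫ v, exp (-Φ v) := by
  have hC : 0 ≤ ∫ v, exp (-Φ v) := integral_nonneg fun v => (exp_pos _).le
  rw [mu2, integral_withDensity_eq_integral_toReal_smul (by fun_prop)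
    (ae_of_all _ fun _ => ENNReal.ofReal_lt_top), ← integral_div]
  congr 1 with v
  rw [ENNReal.toReal_ofReal (div_nonneg (exp_pos _).le hC), smul_eq_mul]
  ring

lemma integrable_mu2_iff (hΦ : Measurable Φ) (hCΦ : Integrable fun v => exp (-Φ v))
    (g : E d → ℝ) : Integrable g (mu2 d Φ) ↔ Integrable (fun v => exp (-Φ v) * g v) := by
  have hC : 0 < ∫ v, exp (-Φ v) := integral_exp_pos hCΦ
  rw [mu2, integrable_withDensity_iff_integrable_smul' (by fun_prop)
    (ae_of_all _ fun _ => ENNReal.ofReal_lt_top),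
    ← integrable_const_mul_iff (inv_pos.mpr hC).ne'.isUnit (fun v => exp (-Φ v) * g v)]
  refine integrable_congr (ae_of_all _ fun v => ?_)
  dsimp only
  rw [ENNReal.toReal_ofReal (div_nonneg (exp_pos _).le hC.le), smul_eq_mul]
  ring

end Mu2

section Substitution

variable {d : ℕ} {ψ g : ℝ → ℝ}

lemma eqOn_comp_sq_rpow_half (hd : 0 < d) :
    EqOn (fun x => (2 * x) • (fun u => u ^ ((d : ℝ) / 2) * g u ^ 2 * exp (-ψ u)) (x ^ 2))
      (fun r => 2 * (r ^ (d - 1) * (exp (-ψ (r ^ 2)) * (g (r ^ 2) ^ 2 * r ^ 2)))) (Ioi 0) := by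
  intro x (hx : 0 < x)
  obtain ⟨m, rfl⟩ := Nat.exists_eq_add_of_lt hd
  simp only [sq_rpow_natCast_div_two hx.le, smul_eq_mul, zero_add, Nat.add_sub_cancel]
  ring

lemma integrableOn_rpow_half_iff (hd : 0 < d) :
    IntegrableOn (fun u => u ^ ((d : ℝ) / 2) * g u ^ 2 * exp (-ψ u)) (Ioi 0)
      ↔ IntegrableOn (fun r => r ^ (d - 1) * (exp (-ψ (r ^ 2)) * (g (r ^ 2) ^ 2 * r ^ 2)))
        (Ioi 0) := by
  rw [← integrableOn_Ioi_comp_sq_iff, integrableOn_congr_fun (eqOn_comp_sq_rpow_half hd)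
    measurableSet_Ioi]
  exact integrable_const_mul_iff (isUnit_iff_ne_zero.mpr two_ne_zero) _

lemma integral_rpow_half_eq (hd : 0 < d) :
    ∫ u in Ioi 0, u ^ ((d : ℝ) / 2) * g u ^ 2 * exp (-ψ u)
      = 2 * ∫ r in Ioi 0, r ^ (d - 1) * (exp (-ψ (r ^ 2)) * (g (r ^ 2) ^ 2 * r ^ 2)) := by
  rw [← integral_Ioi_comp_sq, setIntegral_congr_fun measurableSet_Ioi
    (eqOn_comp_sq_rpow_half hd), integral_const_mul]

end Substitution

section RadialMu2

variable {d : ℕ}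

lemma nontrivial_E (hd : 0 < d) : Nontrivial (E d) :=
  Module.nontrivial_of_finrank_pos (by rwa [finrank_euclideanSpace_fin])

lemma ae_ne_zero_mu2 (hd : 0 < d) (Φ : E d → ℝ) : ∀ᵐ v ∂mu2 d Φ, v ≠ 0 :=
  have := nontrivial_E hd
  mu2_absolutelyContinuous.ae_le (Measure.ae_ne volume 0)

lemma integrable_radial_iff (hd : 0 < d) {f : ℝ → ℝ} :
    Integrable (fun v : E d => f ‖v‖) ↔ IntegrableOn (fun r => r ^ (d - 1) * f r) (Ioi 0) := by
  have := nontrivial_E hd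
  rw [integrable_fun_norm_addHaar volume, finrank_euclideanSpace_fin]
  simp only [smul_eq_mul]

lemma integral_radial (hd : 0 < d) (f : ℝ → ℝ) :
    ∫ v : E d, f ‖v‖ = d * (volume (Metric.ball (0 : E d) 1)).toReal
      * ∫ r in Ioi 0, r ^ (d - 1) * f r := by
  have := nontrivial_E hd
  simp [integral_fun_norm_addHaar (volume : Measure (E d)) f, mul_assoc, Measure.real]

variable {ψ : ℝ → ℝ}

lemma integrableOn_radial_of_integrable_mu2 (hd : 0 < d) (hψ : ContinuousOn ψ (Ici 0))
    (hCΦ : Integrable fun v : E d => exp (-ψ (‖v‖ ^ 2))) {h : ℝ → ℝ}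
    (hh : Integrable (fun v : E d => h ‖v‖) (mu2 d fun v => ψ (‖v‖ ^ 2))) :
    IntegrableOn (fun r => r ^ (d - 1) * (exp (-ψ (r ^ 2)) * h r)) (Ioi 0) :=
  (integrable_radial_iff hd).1 <|
    (integrable_mu2_iff (continuous_comp_norm_sq hψ).measurable hCΦ _).1 hh

lemma integral_mu2_radial (hd : 0 < d) (hψ : ContinuousOn ψ (Ici 0)) (h : ℝ → ℝ) :
    ∫ v, h ‖v‖ ∂mu2 d (fun v => ψ (‖v‖ ^ 2))
      = d * (volume (Metric.ball (0 : E d) 1)).toReal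
        * (∫ r in Ioi 0, r ^ (d - 1) * (exp (-ψ (r ^ 2)) * h r))
        / ∫ v : E d, exp (-ψ (‖v‖ ^ 2)) := by
  rw [integral_mu2 (continuous_comp_norm_sq hψ).measurable,
    integral_radial hd fun r => exp (-ψ (r ^ 2)) * h r]

end RadialMu2

theorem statement4_general
    (d : ℕ) (hd : 0 < d)
    (ψ : ℝ → ℝ) (hψ : ContDiffOn ℝ 2 ψ (Ici 0))
    (Φ : E d → ℝ) (hΦdef : ∀ v, Φ v = ψ (‖v‖ ^ 2))
    (hCΦ : Integrable fun v : E d => Real.exp (-(Φ v)))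
    (hmom : Integrable (fun v : E d => ‖gradient Φ v‖ ^ 2 + ‖fderiv ℝ (gradient Φ) v‖)
      (mu2 d Φ)) :
    Integrable (fun v : E d =>
        (2 / (d : ℝ)) * derivWithin (derivWithin ψ (Ici 0)) (Ici 0) (‖v‖ ^ 2) * ‖v‖ ^ 2
          + derivWithin ψ (Ici 0) (‖v‖ ^ 2)) (mu2 d Φ)
    ∧ Integrable (fun v : E d => (derivWithin ψ (Ici 0) (‖v‖ ^ 2)) ^ 2 * ‖v‖ ^ 2) (mu2 d Φ)
    ∧ IntegrableOn
        (fun u => u ^ ((d : ℝ) / 2) * (derivWithin ψ (Ici 0) u) ^ 2 * Real.exp (-(ψ u)))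
        (Ioi 0)
    ∧ 2 * ∫ v, ((2 / (d : ℝ)) * derivWithin (derivWithin ψ (Ici 0)) (Ici 0) (‖v‖ ^ 2) * ‖v‖ ^ 2
            + derivWithin ψ (Ici 0) (‖v‖ ^ 2)) ∂(mu2 d Φ)
        = (4 / (d : ℝ)) * ∫ v, (derivWithin ψ (Ici 0) (‖v‖ ^ 2)) ^ 2 * ‖v‖ ^ 2 ∂(mu2 d Φ)
    ∧ (4 / (d : ℝ)) * ∫ v, (derivWithin ψ (Ici 0) (‖v‖ ^ 2)) ^ 2 * ‖v‖ ^ 2 ∂(mu2 d Φ)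
        = (2 * (volume (Metric.ball (0 : E d) 1)).toReal / ∫ v : E d, Real.exp (-(Φ v)))
            * ∫ u in Ioi (0 : ℝ),
                u ^ ((d : ℝ) / 2) * (derivWithin ψ (Ici 0) u) ^ 2 * Real.exp (-(ψ u)) := by
  obtain rfl : Φ = fun v => ψ (‖v‖ ^ 2) := funext hΦdef
  set p₁ : ℝ → ℝ := fun r => 2 / d * derivWithin (derivWithin ψ (Ici 0)) (Ici 0) (r ^ 2) * r ^ 2
    + derivWithin ψ (Ici 0) (r ^ 2)
  set p₂ : ℝ → ℝ := fun r => derivWithin ψ (Ici 0) (r ^ 2) ^ 2 * r ^ 2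
  have hint₁ : Integrable (fun v : E d => p₁ ‖v‖) (mu2 d _) :=
    integrable_radial_laplacian finrank_euclideanSpace_fin hψ (ae_ne_zero_mu2 hd _) hmom
  have hint₂ : Integrable (fun v : E d => p₂ ‖v‖) (mu2 d _) :=
    integrable_radial_gradient_sq hψ (ae_ne_zero_mu2 hd _) hmom
  have hq₀ := (integrable_radial_iff hd (f := fun r => exp (-ψ (r ^ 2)))).1 hCΦ
  have hq₁ := integrableOn_radial_of_integrable_mu2 hd hψ.continuousOn hCΦ hint₁
  have hq₂ := integrableOn_radial_of_integrable_mu2 hd hψ.continuousOn hCΦ hint₂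
  refine ⟨hint₁, hint₂, (integrableOn_rpow_half_iff hd).2 hq₂, ?_, ?_⟩
  · rw [integral_mu2_radial hd hψ.continuousOn p₁, integral_mu2_radial hd hψ.continuousOn p₂,
      integral_Ioi_laplacian_profile_eq hψ hd hq₀ hq₁ hq₂]
    ring
  · rw [integral_mu2_radial hd hψ.continuousOn p₂, integral_rpow_half_eq hd]
    simp only [p₂]
    field_simp
    ring

/-- The moment identities for radial `Φ(v) = ψ(|v|²)`:
`2 ∫ ((2/d) ψ''(|v|²)|v|² + ψ'(|v|²)) dμ₂ = (4/d) ∫ ψ'(|v|²)²|v|² dμ₂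
  = (2 ω_d / C_Φ) ∫_0^∞ u^{d/2} ψ'(u)² e^{-ψ(u)} du`, and the common value is finite. -/
theorem statement4
    (d : ℕ) (hd : 0 < d)
    (ψ : ℝ → ℝ) (hψ : ContDiffOn ℝ 2 ψ (Ici 0)) (hψ0 : ∀ r ∈ Ici (0 : ℝ), 0 ≤ ψ r)
    (Φ : E d → ℝ) (hΦdef : ∀ v, Φ v = ψ (‖v‖ ^ 2))
    (hCΦ : Integrable fun v : E d => Real.exp (-(Φ v)))
    (hmom : Integrable (fun v : E d => ‖gradient Φ v‖ ^ 2 + ‖fderiv ℝ (gradient Φ) v‖)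
      (mu2 d Φ))
    (hdecay : Tendsto (fun v : E d => ‖gradient (fun w => Real.exp (-(Φ w))) v‖)
      (Bornology.cobounded (E d)) (𝓝 0)) :
    Integrable (fun v : E d =>
        (2 / (d : ℝ)) * derivWithin (derivWithin ψ (Ici 0)) (Ici 0) (‖v‖ ^ 2) * ‖v‖ ^ 2
          + derivWithin ψ (Ici 0) (‖v‖ ^ 2)) (mu2 d Φ)
    ∧ Integrable (fun v : E d => (derivWithin ψ (Ici 0) (‖v‖ ^ 2)) ^ 2 * ‖v‖ ^ 2) (mu2 d Φ)
    ∧ IntegrableOn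
        (fun u => u ^ ((d : ℝ) / 2) * (derivWithin ψ (Ici 0) u) ^ 2 * Real.exp (-(ψ u)))
        (Ioi 0)
    ∧ 2 * ∫ v, ((2 / (d : ℝ)) * derivWithin (derivWithin ψ (Ici 0)) (Ici 0) (‖v‖ ^ 2) * ‖v‖ ^ 2
            + derivWithin ψ (Ici 0) (‖v‖ ^ 2)) ∂(mu2 d Φ)
        = (4 / (d : ℝ)) * ∫ v, (derivWithin ψ (Ici 0) (‖v‖ ^ 2)) ^ 2 * ‖v‖ ^ 2 ∂(mu2 d Φ)
    ∧ (4 / (d : ℝ)) * ∫ v, (derivWithin ψ (Ici 0) (‖v‖ ^ 2)) ^ 2 * ‖v‖ ^ 2 ∂(mu2 d Φ)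
        = (2 * (volume (Metric.ball (0 : E d) 1)).toReal / ∫ v : E d, Real.exp (-(Φ v)))
            * ∫ u in Ioi (0 : ℝ),
                u ^ ((d : ℝ) / 2) * (derivWithin ψ (Ici 0) u) ^ 2 * Real.exp (-(ψ u)) :=
  statement4_general d hd ψ hψ Φ hΦdef hCΦ hmom
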